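/- arXiv:math/0701773 — 8 statements merged into one kernel-verified Lean document; each statement's English description precedes it below -/
import Mathlib

section
/- The function H1(φ1, φ2, ψ1, ψ2) = (φ1² + 4φ2²)² − φ1² − 16φ2² + ψ1² + 4ψ2² is a first integral of the system φ1'' = (1 − 2φ1² − 8φ2²)φ1, φ2'' = (4 − 2φ1² − 8φ2²)φ2; that is, for any solution (φ1, φ2) of the system, the derivative of y ↦ H1(φ1(y), φ2(y), φ1'(y), φ2'(y)) is identically zero. -/
theorem stmt_0 (φ1 φ2 : ℝ → ℝ)
    (hd1 : Differentiable ℝ φ1) (hd2 : Differentiable ℝ φ2)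
    (hd1' : Differentiable ℝ (deriv φ1)) (hd2' : Differentiable ℝ (deriv φ2))
    (h1 : ∀ y, deriv (deriv φ1) y = (1 - 2 * (φ1 y)^2 - 8 * (φ2 y)^2) * φ1 y)
    (h2 : ∀ y, deriv (deriv φ2) y = (4 - 2 * (φ1 y)^2 - 8 * (φ2 y)^2) * φ2 y) :
    ∀ y, deriv (fun y => ((φ1 y)^2 + 4 * (φ2 y)^2)^2 - (φ1 y)^2 - 16 * (φ2 y)^2
      + (deriv φ1 y)^2 + 4 * (deriv φ2 y)^2) y = 0 := by
  intro y
  have H : HasDerivAt (fun y => ((φ1 y)^2 + 4 * (φ2 y)^2)^2 - (φ1 y)^2 - 16 * (φ2 y)^2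
      + (deriv φ1 y)^2 + 4 * (deriv φ2 y)^2) 0 y := by
    have A1 := (hd1 y).hasDerivAt
    have A2 := (hd2 y).hasDerivAt
    have B1 := (hd1' y).hasDerivAt
    have B2 := (hd2' y).hasDerivAt
    rw [h1 y] at B1
    rw [h2 y] at B2
    have := ((((A1.pow 2).add ((A2.pow 2).const_mul 4)).pow 2).sub (A1.pow 2)).sub
      ((A2.pow 2).const_mul 16) |>.add (((hd1' y).hasDerivAt).pow 2) |>.add
      ((((hd2' y).hasDerivAt).pow 2).const_mul 4)
    convert this using 1
    · rfl
    · rfl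
    · rfl
    rw [h1 y, h2 y]
    simp only [Pi.add_apply, Pi.pow_apply]
    ring
  exact H.deriv
end

section
/- The function H2(φ1, φ2, ψ1, ψ2) = 12φ2²(φ2² − 1) + 3φ1²φ2² + φ2²ψ1² − 2φ1ψ1φ2ψ2 + (3 + φ1²)ψ2² is a first integral of the system φ1'' = (1 − 2φ1² − 8φ2²)φ1, φ2'' = (4 − 2φ1² − 8φ2²)φ2; that is, for any solution, y ↦ H2(φ1(y), φ2(y), φ1'(y), φ2'(y)) is constant. -/
theorem stmt_1 (φ1 φ2 : ℝ → ℝ)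
    (hd1 : Differentiable ℝ φ1) (hd2 : Differentiable ℝ φ2)
    (hd1' : Differentiable ℝ (deriv φ1)) (hd2' : Differentiable ℝ (deriv φ2))
    (h1 : ∀ y, deriv (deriv φ1) y = (1 - 2 * (φ1 y)^2 - 8 * (φ2 y)^2) * φ1 y)
    (h2 : ∀ y, deriv (deriv φ2) y = (4 - 2 * (φ1 y)^2 - 8 * (φ2 y)^2) * φ2 y) :
    ∀ y z : ℝ,
      12 * (φ2 y)^2 * ((φ2 y)^2 - 1) + 3 * (φ1 y)^2 * (φ2 y)^2
        + (φ2 y)^2 * (deriv φ1 y)^2 - 2 * φ1 y * deriv φ1 y * φ2 y * deriv φ2 y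
        + (3 + (φ1 y)^2) * (deriv φ2 y)^2
      = 12 * (φ2 z)^2 * ((φ2 z)^2 - 1) + 3 * (φ1 z)^2 * (φ2 z)^2
        + (φ2 z)^2 * (deriv φ1 z)^2 - 2 * φ1 z * deriv φ1 z * φ2 z * deriv φ2 z
        + (3 + (φ1 z)^2) * (deriv φ2 z)^2 := by
  set H : ℝ → ℝ := fun y =>
      12 * (φ2 y)^2 * ((φ2 y)^2 - 1) + 3 * (φ1 y)^2 * (φ2 y)^2
        + (φ2 y)^2 * (deriv φ1 y)^2 - 2 * φ1 y * deriv φ1 y * φ2 y * deriv φ2 y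
        + (3 + (φ1 y)^2) * (deriv φ2 y)^2 with hH
  have key : ∀ y, HasDerivAt H 0 y := by
    intro y
    have ha : HasDerivAt φ1 (deriv φ1 y) y := (hd1 y).hasDerivAt
    have hb : HasDerivAt φ2 (deriv φ2 y) y := (hd2 y).hasDerivAt
    have hp : HasDerivAt (deriv φ1) ((1 - 2 * (φ1 y)^2 - 8 * (φ2 y)^2) * φ1 y) y := by
      have := (hd1' y).hasDerivAt
      rwa [h1 y] at this
    have hq : HasDerivAt (deriv φ2) ((4 - 2 * (φ1 y)^2 - 8 * (φ2 y)^2) * φ2 y) y := by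
      have := (hd2' y).hasDerivAt
      rwa [h2 y] at this
    have h := ((((((hb.pow 2).const_mul 12).mul ((hb.pow 2).sub_const 1)).add
        (((ha.pow 2).const_mul 3).mul (hb.pow 2))).add
        ((hb.pow 2).mul (hp.pow 2))).sub
        ((((ha.const_mul 2).mul hp).mul hb).mul hq)).add
        (((ha.pow 2).const_add 3).mul (hq.pow 2))
    refine (h.congr_deriv ?_).congr_of_eventuallyEq (Filter.Eventually.of_forall fun x => ?_)
    · simp only [Pi.pow_apply, Pi.mul_apply, Pi.add_apply, Pi.sub_apply]; norm_num; ring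
    · simp only [hH, Pi.pow_apply, Pi.mul_apply, Pi.add_apply, Pi.sub_apply]
  intro y z
  have : H y = H z := by
    have hc : ∀ x, H x = H 0 := fun x =>
      is_const_of_deriv_eq_zero (fun t => (key t).differentiableAt)
        (fun t => (key t).deriv) x 0
    rw [hc y, hc z]
  exact this
end

section
/- If (φ1, φ2) solves the system φ1'' = (1 − 2φ1² − 8φ2²)φ1, φ2'' = (4 − 2φ1² − 8φ2²)φ2 with φ1(0) = 0, φ2(0) = p, φ1'(0) = 2p, φ2'(0) = 0, then for all y, 12φ2²(φ2² − 1) + 3φ1²φ2² + φ2²(φ1')² − 2φ1φ1'φ2φ2' + (3 + φ1²)(φ2')² = −4p²(3 − 4p²). -/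
theorem stmt_3 (p : ℝ) (φ1 φ2 : ℝ → ℝ)
    (hd1 : Differentiable ℝ φ1) (hd2 : Differentiable ℝ φ2)
    (hd1' : Differentiable ℝ (deriv φ1)) (hd2' : Differentiable ℝ (deriv φ2))
    (h1 : ∀ y, deriv (deriv φ1) y = (1 - 2 * (φ1 y)^2 - 8 * (φ2 y)^2) * φ1 y)
    (h2 : ∀ y, deriv (deriv φ2) y = (4 - 2 * (φ1 y)^2 - 8 * (φ2 y)^2) * φ2 y)
    (hi1 : φ1 0 = 0) (hi2 : φ2 0 = p) (hi3 : deriv φ1 0 = 2 * p) (hi4 : deriv φ2 0 = 0) :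
    ∀ y, 12 * (φ2 y)^2 * ((φ2 y)^2 - 1) + 3 * (φ1 y)^2 * (φ2 y)^2
      + (φ2 y)^2 * (deriv φ1 y)^2 - 2 * φ1 y * deriv φ1 y * φ2 y * deriv φ2 y
      + (3 + (φ1 y)^2) * (deriv φ2 y)^2 = -4 * p^2 * (3 - 4 * p^2) := by
  set f : ℝ → ℝ := fun y => 12 * (φ2 y)^2 * ((φ2 y)^2 - 1) + 3 * (φ1 y)^2 * (φ2 y)^2
      + (φ2 y)^2 * (deriv φ1 y)^2 - 2 * φ1 y * deriv φ1 y * φ2 y * deriv φ2 y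
      + (3 + (φ1 y)^2) * (deriv φ2 y)^2 with hf
  have key : ∀ y, HasDerivAt f 0 y := by
    intro y
    have A : HasDerivAt φ1 (deriv φ1 y) y := (hd1 y).hasDerivAt
    have A' : HasDerivAt (deriv φ1) (deriv (deriv φ1) y) y := (hd1' y).hasDerivAt
    have B : HasDerivAt φ2 (deriv φ2 y) y := (hd2 y).hasDerivAt
    have B' : HasDerivAt (deriv φ2) (deriv (deriv φ2) y) y := (hd2' y).hasDerivAt
    have H := ((((((B.pow 2).const_mul 12).mul ((B.pow 2).sub_const 1)).add
        (((A.pow 2).const_mul 3).mul (B.pow 2))).add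
        ((B.pow 2).mul (A'.pow 2))).sub
        ((((A.mul A').const_mul 2).mul B).mul B')).add
        ((((A.pow 2).const_add 3)).mul (B'.pow 2))
    convert H using 1
    · rfl
    · rfl
    · funext x; simp only [hf, Pi.mul_apply, Pi.add_apply, Pi.sub_apply, Pi.pow_apply]; ring
    · rw [h1 y, h2 y]; simp only [Pi.mul_apply, Pi.add_apply, Pi.sub_apply, Pi.pow_apply]; ring
  have hc : ∀ y, f y = f 0 := by
    intro y
    exact is_const_of_deriv_eq_zero (fun x => (key x).differentiableAt)
      (fun x => (key x).deriv) y 0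
  intro y
  have := hc y
  simp only [hf] at this
  rw [this, hi1, hi2, hi3, hi4]
  ring
end

section
/- If (φ1, φ2) solves the system φ1'' = (1 − 2φ1² − 8φ2²)φ1, φ2'' = (4 − 2φ1² − 8φ2²)φ2 and satisfies both first-integral equations (φ1² + 4φ2²)² − φ1² − 16φ2² + (φ1')² + 4(φ2')² = C and 12φ2²(φ2² − 1) + 3φ1²φ2² + φ2²(φ1')² − 2φ1φ1'φ2φ2' + (3 + φ1²)(φ2')² = C (same constant C), and if 1 − φ1² − φ2² > 0 everywhere, then the function φ0 = √(1 − φ1² − φ2²) satisfies (φ0')² + (φ1')² + (φ2')² = φ1² + 4φ2². -/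
theorem stmt_5 (C : ℝ) (φ1 φ2 : ℝ → ℝ)
    (hd1 : Differentiable ℝ φ1) (hd2 : Differentiable ℝ φ2)
    (hd1' : Differentiable ℝ (deriv φ1)) (hd2' : Differentiable ℝ (deriv φ2))
    (h1 : ∀ y, deriv (deriv φ1) y = (1 - 2 * (φ1 y)^2 - 8 * (φ2 y)^2) * φ1 y)
    (h2 : ∀ y, deriv (deriv φ2) y = (4 - 2 * (φ1 y)^2 - 8 * (φ2 y)^2) * φ2 y)
    (hI1 : ∀ y, ((φ1 y)^2 + 4 * (φ2 y)^2)^2 - (φ1 y)^2 - 16 * (φ2 y)^2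
      + (deriv φ1 y)^2 + 4 * (deriv φ2 y)^2 = C)
    (hI2 : ∀ y, 12 * (φ2 y)^2 * ((φ2 y)^2 - 1) + 3 * (φ1 y)^2 * (φ2 y)^2
      + (φ2 y)^2 * (deriv φ1 y)^2 - 2 * φ1 y * deriv φ1 y * φ2 y * deriv φ2 y
      + (3 + (φ1 y)^2) * (deriv φ2 y)^2 = C)
    (hpos : ∀ y, 0 < 1 - (φ1 y)^2 - (φ2 y)^2)
    (φ0 : ℝ → ℝ) (hφ0 : ∀ y, φ0 y = Real.sqrt (1 - (φ1 y)^2 - (φ2 y)^2)) :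
    ∀ y, (deriv φ0 y)^2 + (deriv φ1 y)^2 + (deriv φ2 y)^2
      = (φ1 y)^2 + 4 * (φ2 y)^2 := by
  intro y
  set g : ℝ → ℝ := fun y => 1 - (φ1 y)^2 - (φ2 y)^2 with hg
  have hφ0' : φ0 = fun y => Real.sqrt (g y) := funext fun y => hφ0 y
  have hgd : DifferentiableAt ℝ g y := by
    apply DifferentiableAt.sub
    apply DifferentiableAt.sub
    · exact differentiableAt_const _
    · exact ((hd1 y).pow 2)
    · exact ((hd2 y).pow 2)
  have hgy : (0:ℝ) < g y := hpos y
  have hderiv0 : deriv φ0 y = deriv g y / (2 * Real.sqrt (g y)) := by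
    rw [hφ0']
    exact deriv_sqrt hgd hgy.ne'
  have hderivg : deriv g y = -(2 * φ1 y * deriv φ1 y + 2 * φ2 y * deriv φ2 y) := by
    have : deriv g y = deriv (fun y => 1 - (φ1 y)^2 - (φ2 y)^2) y := rfl
    rw [this]
    rw [deriv_fun_sub (by exact (differentiableAt_const _).fun_sub ((hd1 y).fun_pow 2)) ((hd2 y).fun_pow 2),
      deriv_fun_sub (differentiableAt_const _) ((hd1 y).fun_pow 2),
      deriv_const, deriv_fun_pow (hd1 y) 2, deriv_fun_pow (hd2 y) 2]
    ring
  have hs : Real.sqrt (g y) ^ 2 = g y := Real.sq_sqrt hgy.le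
  have hspos : 0 < Real.sqrt (g y) := Real.sqrt_pos.mpr hgy
  have hE := sub_eq_zero.mpr ((hI1 y).trans (hI2 y).symm)
  rw [hderiv0, hderivg, div_pow]
  rw [div_add' _ _ _ (by positivity), div_add' _ _ _ (by positivity),
    div_eq_iff (by positivity)]
  have hgval : g y = 1 - (φ1 y)^2 - (φ2 y)^2 := rfl
  nlinarith [hE, hs, hgval, sq_nonneg (Real.sqrt (g y))]
end

section
/- Under the parabolic change of variables q1² = −(2/3)uv, q2² = (1/6)(3 + 2u)(3 + 2v), any solution (q1, q2) of the system of first-integral equations (1/2)((q1')² + (q2')²) + (q1² + q2²)² − q1²/2 − 2q2² + p²(3 − 4p²) = 0 and 3q2²(q2² − 2) + 3q1²q2² + (q1')²q2² − 2q1q1'q2q2' + (1/2)(3 + 2q1²)(q2')² + 4p²(3 − 4p²) = 0 yields functions u, v satisfying (u')² = P(u)/(u − v)² and (v')² = P(v)/(u − v)², where P(s) = s(1 − 2s)(3 + 2s)(2p² + s)(3 − 4p² + 2s). -/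
theorem stmt_12 (p : ℝ) (q1 q2 u v : ℝ → ℝ)
    (hdq1 : Differentiable ℝ q1) (hdq2 : Differentiable ℝ q2)
    (hdu : Differentiable ℝ u) (hdv : Differentiable ℝ v)
    (hne : ∀ y, u y ≠ v y)
    (hu : ∀ y, (q1 y)^2 = -(2/3) * (u y * v y))
    (hv : ∀ y, (q2 y)^2 = (1/6) * (3 + 2 * u y) * (3 + 2 * v y))
    (hI1 : ∀ y, (1/2) * ((deriv q1 y)^2 + (deriv q2 y)^2)
      + ((q1 y)^2 + (q2 y)^2)^2 - (q1 y)^2 / 2 - 2 * (q2 y)^2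
      + p^2 * (3 - 4 * p^2) = 0)
    (hI2 : ∀ y, 3 * (q2 y)^2 * ((q2 y)^2 - 2) + 3 * (q1 y)^2 * (q2 y)^2
      + (deriv q1 y)^2 * (q2 y)^2 - 2 * q1 y * deriv q1 y * q2 y * deriv q2 y
      + (1/2) * (3 + 2 * (q1 y)^2) * (deriv q2 y)^2 + 4 * p^2 * (3 - 4 * p^2) = 0)
    (P : ℝ → ℝ)
    (hP : P = fun s => s * (1 - 2*s) * (3 + 2*s) * (2*p^2 + s) * (3 - 4*p^2 + 2*s)) :
    ∀ y, (deriv u y)^2 = P (u y) / (u y - v y)^2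
      ∧ (deriv v y)^2 = P (v y) / (u y - v y)^2 := by
  intro y
  have hsub : u y - v y ≠ 0 := sub_ne_zero.mpr (hne y)
  have h3 : 2 * q1 y * deriv q1 y
      = -(2/3) * (deriv u y * v y + u y * deriv v y) := by
    have hL : HasDerivAt (fun t => (q1 t)^2) (2 * q1 y * deriv q1 y) y := by
      simpa [mul_comm, mul_assoc] using ((hdq1 y).hasDerivAt.fun_pow 2)
    have hR : HasDerivAt (fun t => -(2/3) * (u t * v t))
        (-(2/3) * (deriv u y * v y + u y * deriv v y)) y :=
      (((hdu y).hasDerivAt.mul (hdv y).hasDerivAt)).const_mul _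
    have hfe : (fun t => (q1 t)^2) = (fun t => -(2/3) * (u t * v t)) := funext hu
    rw [hfe] at hL
    exact hL.unique hR
  have h4 : 2 * q2 y * deriv q2 y
      = (1/3) * (deriv u y * (3 + 2 * v y) + deriv v y * (3 + 2 * u y)) := by
    have hL : HasDerivAt (fun t => (q2 t)^2) (2 * q2 y * deriv q2 y) y := by
      simpa [mul_comm, mul_assoc] using ((hdq2 y).hasDerivAt.fun_pow 2)
    have hR : HasDerivAt (fun t => (1/6) * (3 + 2 * u t) * (3 + 2 * v t))
        ((1/6) * (2 * deriv u y) * (3 + 2 * v y)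
          + (1/6) * (3 + 2 * u y) * (2 * deriv v y)) y := by
      have h1 : HasDerivAt (fun t => (1/6) * (3 + 2 * u t)) ((1/6) * (2 * deriv u y)) y :=
        ((((hdu y).hasDerivAt.const_mul (2:ℝ)).const_add 3).const_mul _)
      have h2 : HasDerivAt (fun t => 3 + 2 * v t) (2 * deriv v y) y :=
        (((hdv y).hasDerivAt.const_mul (2:ℝ)).const_add 3)
      exact h1.mul h2
    have hfe : (fun t => (q2 t)^2) = (fun t => (1/6) * (3 + 2 * u t) * (3 + 2 * v t)) :=
      funext hv
    rw [hfe] at hL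
    have := hL.unique hR
    linarith [this]
  constructor
  · rw [hP]
    show (deriv u y)^2 = (u y * (1 - 2*(u y)) * (3 + 2*(u y)) * (2*p^2 + u y)
      * (3 - 4*p^2 + 2*(u y))) / (u y - v y)^2
    rw [eq_div_iff (pow_ne_zero 2 hsub)]
    have key : (u y - v y)^3 * ((deriv u y)^2 * (u y - v y)^2
        - u y * (1 - 2*(u y)) * (3 + 2*(u y)) * (2*p^2 + u y) * (3 - 4*p^2 + 2*(u y))) = 0 := by
      linear_combination ((-18)*(u y)*(v y)^3 + 54*(u y)^2*(v y)^2 + (-24)*(u y)^2*(v y)^3 + (-54)*(u y)^3*(v y) + 72*(u y)^3*(v y)^2 + (-8)*(u y)^3*(v y)^3 + 18*(u y)^4 + (-72)*(u y)^4*(v y) + 24*(u y)^4*(v y)^2 + 24*(u y)^5 + (-24)*(u y)^5*(v y) + 8*(u y)^6) * (hI1 y) +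
      (6*(u y)*(v y)^3 + (-18)*(u y)^2*(v y)^2 + 4*(u y)^2*(v y)^3 + 18*(u y)^3*(v y) + (-12)*(u y)^3*(v y)^2 + (-6)*(u y)^4 + 12*(u y)^4*(v y) + (-4)*(u y)^5) * (hI2 y) +
      ((9/2)*(v y)^3*(q1 y)*(deriv q1 y) + (-3/2)*(v y)^4*(deriv u y) + (-27/2)*(u y)*(v y)^2*(q1 y)*(deriv q1 y) + 6*(u y)*(v y)^3*(q2 y)*(deriv q2 y) + 6*(u y)*(v y)^3*(q1 y)*(deriv q1 y) + (-3/2)*(u y)*(v y)^3*(deriv v y) + (9/2)*(u y)*(v y)^3*(deriv u y) + (-2)*(u y)*(v y)^4*(deriv u y) + (27/2)*(u y)^2*(v y)*(q1 y)*(deriv q1 y) + (-18)*(u y)^2*(v y)^2*(q2 y)*(deriv q2 y) + (-18)*(u y)^2*(v y)^2*(q1 y)*(deriv q1 y) + (9/2)*(u y)^2*(v y)^2*(deriv v y) + (-9/2)*(u y)^2*(v y)^2*(deriv u y) + 4*(u y)^2*(v y)^3*(q2 y)*(deriv q2 y) + 2*(u y)^2*(v y)^3*(q1 y)*(deriv q1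 y) + (-2)*(u y)^2*(v y)^3*(deriv v y) + 6*(u y)^2*(v y)^3*(deriv u y) + (-2/3)*(u y)^2*(v y)^4*(deriv u y) + (-9/2)*(u y)^3*(q1 y)*(deriv q1 y) + 18*(u y)^3*(v y)*(q2 y)*(deriv q2 y) + 18*(u y)^3*(v y)*(q1 y)*(deriv q1 y) + (-9/2)*(u y)^3*(v y)*(deriv v y) + (3/2)*(u y)^3*(v y)*(deriv u y) + (-12)*(u y)^3*(v y)^2*(q2 y)*(deriv q2 y) + (-6)*(u y)^3*(v y)^2*(q1 y)*(deriv q1 y) + 6*(u y)^3*(v y)^2*(deriv v y) + (-6)*(u y)^3*(v y)^2*(deriv u y) + (-2/3)*(u y)^3*(v y)^3*(deriv v y) + 2*(u y)^3*(v y)^3*(deriv u y) + (-6)*(u y)^4*(q2 y)*(deriv q2 y) + (-6)*(u y)^4*(q1 y)*(deriv q1 y) + (3/2)*(u y)^4*(deriv v y) + 12*(u y)^4*(v y)*(q2 y)*(deriv q2 y) + 6*(u y)^4*(v y)*(q1 y)*(deriv q1 y) + (-6)*(u y)^4*(v y)*(deriv v y) + 2*(u y)^4*(v y)*(deriv u y)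 + 2*(u y)^4*(v y)^2*(deriv v y) + (-2)*(u y)^4*(v y)^2*(deriv u y) + (-4)*(u y)^5*(q2 y)*(deriv q2 y) + (-2)*(u y)^5*(q1 y)*(deriv q1 y) + 2*(u y)^5*(deriv v y) + (-2)*(u y)^5*(v y)*(deriv v y) + (2/3)*(u y)^5*(v y)*(deriv u y) + (2/3)*(u y)^6*(deriv v y)) * h3 +
      ((-2)*(u y)*(v y)^4*(deriv u y) + 2*(u y)^2*(v y)^3*(q2 y)*(deriv q2 y) + (-1)*(u y)^2*(v y)^3*(deriv v y) + 7*(u y)^2*(v y)^3*(deriv u y) + (-2/3)*(u y)^2*(v y)^4*(deriv u y) + (-6)*(u y)^3*(v y)^2*(q2 y)*(deriv q2 y) + 3*(u y)^3*(v y)^2*(deriv v y) + (-9)*(u y)^3*(v y)^2*(deriv u y) + (-2/3)*(u y)^3*(v y)^3*(deriv v y) + 2*(u y)^3*(v y)^3*(deriv u y) + 6*(u y)^4*(v y)*(q2 y)*(deriv q2 y) + (-3)*(u y)^4*(v y)*(deriv v y) + 5*(u y)^4*(v y)*(deriv u y) + 2*(u y)^4*(v y)^2*(deriv v y) + (-2)*(u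 y)^4*(v y)^2*(deriv u y) + (-2)*(u y)^5*(q2 y)*(deriv q2 y) + 1*(u y)^5*(deriv v y) + (-1)*(u y)^5*(deriv u y) + (-2)*(u y)^5*(v y)*(deriv v y) + (2/3)*(u y)^5*(v y)*(deriv u y) + (2/3)*(u y)^6*(deriv v y)) * h4 +
      ((-9)*(v y)^3*(deriv q1 y)^2 + 27*(u y)*(v y)^2*(deriv q1 y)^2 + (-9)*(u y)*(v y)^3 + (-6)*(u y)*(v y)^3*(deriv q2 y)^2 + (-12)*(u y)*(v y)^3*(deriv q1 y)^2 + 18*(u y)*(v y)^3*(q2 y)^2 + 18*(u y)*(v y)^3*(q1 y)^2 + (-27)*(u y)^2*(v y)*(deriv q1 y)^2 + 27*(u y)^2*(v y)^2 + 18*(u y)^2*(v y)^2*(deriv q2 y)^2 + 36*(u y)^2*(v y)^2*(deriv q1 y)^2 + (-54)*(u y)^2*(v y)^2*(q2 y)^2 + (-54)*(u y)^2*(v y)^2*(q1 y)^2 + (-12)*(u y)^2*(v y)^3 + (-4)*(u y)^2*(v y)^3*(deriv q2 y)^2 + (-4)*(u y)^2*(v y)^3*(deriv q1 y)^2 + 36*(u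 y)^2*(v y)^3*(q2 y)^2 + 24*(u y)^2*(v y)^3*(q1 y)^2 + (-12)*(u y)^2*(v y)^4 + 9*(u y)^3*(deriv q1 y)^2 + (-27)*(u y)^3*(v y) + (-18)*(u y)^3*(v y)*(deriv q2 y)^2 + (-36)*(u y)^3*(v y)*(deriv q1 y)^2 + 54*(u y)^3*(v y)*(q2 y)^2 + 54*(u y)^3*(v y)*(q1 y)^2 + 36*(u y)^3*(v y)^2 + 12*(u y)^3*(v y)^2*(deriv q2 y)^2 + 12*(u y)^3*(v y)^2*(deriv q1 y)^2 + (-108)*(u y)^3*(v y)^2*(q2 y)^2 + (-72)*(u y)^3*(v y)^2*(q1 y)^2 + 32*(u y)^3*(v y)^3 + 16*(u y)^3*(v y)^3*(q2 y)^2 + 8*(u y)^3*(v y)^3*(q1 y)^2 + (-16)*(u y)^3*(v y)^4 + 9*(u y)^4 + 6*(u y)^4*(deriv q2 y)^2 + 12*(u y)^4*(deriv q1 y)^2 + (-18)*(u y)^4*(q2 y)^2 + (-18)*(u y)^4*(q1 y)^2 + (-36)*(u y)^4*(v y) + (-12)*(u y)^4*(v y)*(deriv q2 y)^2 + (-12)*(u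 y)^4*(v y)*(deriv q1 y)^2 + 108*(u y)^4*(v y)*(q2 y)^2 + 72*(u y)^4*(v y)*(q1 y)^2 + (-24)*(u y)^4*(v y)^2 + (-48)*(u y)^4*(v y)^2*(q2 y)^2 + (-24)*(u y)^4*(v y)^2*(q1 y)^2 + 48*(u y)^4*(v y)^3 + (-16/3)*(u y)^4*(v y)^4 + 12*(u y)^5 + 4*(u y)^5*(deriv q2 y)^2 + 4*(u y)^5*(deriv q1 y)^2 + (-36)*(u y)^5*(q2 y)^2 + (-24)*(u y)^5*(q1 y)^2 + 48*(u y)^5*(v y)*(q2 y)^2 + 24*(u y)^5*(v y)*(q1 y)^2 + (-48)*(u y)^5*(v y)^2 + 16*(u y)^5*(v y)^3 + 4*(u y)^6 + (-16)*(u y)^6*(q2 y)^2 + (-8)*(u y)^6*(q1 y)^2 + 16*(u y)^6*(v y) + (-16)*(u y)^6*(v y)^2 + (16/3)*(u y)^7*(v y)) * (hu y) +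
      ((-6)*(u y)*(v y)^3*(deriv q1 y)^2 + 18*(u y)^2*(v y)^2*(deriv q1 y)^2 + (-6)*(u y)^2*(v y)^3 + (-4)*(u y)^2*(v y)^3*(deriv q2 y)^2 + (-4)*(u y)^2*(v y)^3*(deriv q1 y)^2 + 12*(u y)^2*(v y)^3*(q2 y)^2 + (-18)*(u y)^3*(v y)*(deriv q1 y)^2 + 18*(u y)^3*(v y)^2 + 12*(u y)^3*(v y)^2*(deriv q2 y)^2 + 12*(u y)^3*(v y)^2*(deriv q1 y)^2 + (-36)*(u y)^3*(v y)^2*(q2 y)^2 + 8*(u y)^3*(v y)^3 + 8*(u y)^3*(v y)^3*(q2 y)^2 + (-8)*(u y)^3*(v y)^4 + 6*(u y)^4*(deriv q1 y)^2 + (-18)*(u y)^4*(v y) + (-12)*(u y)^4*(v y)*(deriv q2 y)^2 + (-12)*(u y)^4*(v y)*(deriv q1 y)^2 + 36*(u y)^4*(v y)*(q2 y)^2 + (-24)*(u y)^4*(v y)^2 + (-24)*(u y)^4*(v y)^2*(q2 y)^2 + 32*(u y)^4*(v y)^3 + (-16/3)*(u y)^4*(v y)^4 + 6*(u y)^5 +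 4*(u y)^5*(deriv q2 y)^2 + 4*(u y)^5*(deriv q1 y)^2 + (-12)*(u y)^5*(q2 y)^2 + 24*(u y)^5*(v y) + 24*(u y)^5*(v y)*(q2 y)^2 + (-48)*(u y)^5*(v y)^2 + 16*(u y)^5*(v y)^3 + (-8)*(u y)^6 + (-8)*(u y)^6*(q2 y)^2 + 32*(u y)^6*(v y) + (-16)*(u y)^6*(v y)^2 + (-8)*(u y)^7 + (16/3)*(u y)^7*(v y)) * (hv y)
    rcases mul_eq_zero.mp key with h | h
    · exact absurd h (pow_ne_zero 3 hsub)
    · linarith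
  · rw [hP]
    show (deriv v y)^2 = (v y * (1 - 2*(v y)) * (3 + 2*(v y)) * (2*p^2 + v y)
      * (3 - 4*p^2 + 2*(v y))) / (u y - v y)^2
    rw [eq_div_iff (pow_ne_zero 2 hsub)]
    have key : (v y - u y)^3 * ((deriv v y)^2 * (v y - u y)^2
        - v y * (1 - 2*(v y)) * (3 + 2*(v y)) * (2*p^2 + v y) * (3 - 4*p^2 + 2*(v y))) = 0 := by
      linear_combination (18*(v y)^4 + 24*(v y)^5 + 8*(v y)^6 + (-54)*(u y)*(v y)^3 + (-72)*(u y)*(v y)^4 + (-24)*(u y)*(v y)^5 + 54*(u y)^2*(v y)^2 + 72*(u y)^2*(v y)^3 + 24*(u y)^2*(v y)^4 + (-18)*(u y)^3*(v y) + (-24)*(u y)^3*(v y)^2 + (-8)*(u y)^3*(v y)^3) * (hI1 y) +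
      ((-6)*(v y)^4 + (-4)*(v y)^5 + 18*(u y)*(v y)^3 + 12*(u y)*(v y)^4 + (-18)*(u y)^2*(v y)^2 + (-12)*(u y)^2*(v y)^3 + 6*(u y)^3*(v y) + 4*(u y)^3*(v y)^2) * (hI2 y) +
      ((-9/2)*(v y)^3*(q1 y)*(deriv q1 y) + (-6)*(v y)^4*(q2 y)*(deriv q2 y) + (-6)*(v y)^4*(q1 y)*(deriv q1 y) + (3/2)*(v y)^4*(deriv u y) + (-4)*(v y)^5*(q2 y)*(deriv q2 y) + (-2)*(v y)^5*(q1 y)*(deriv q1 y) + 2*(v y)^5*(deriv u y) + (2/3)*(v y)^6*(deriv u y) + (27/2)*(u y)*(v y)^2*(q1 y)*(deriv q1 y) + 18*(u y)*(v y)^3*(q2 y)*(deriv q2 y) + 18*(u y)*(v y)^3*(q1 y)*(deriv q1 y) + (3/2)*(u y)*(v y)^3*(deriv v y) + (-9/2)*(u y)*(v y)^3*(deriv u y) + 12*(u y)*(v y)^4*(q2 y)*(deriv q2 y) + 6*(u y)*(v y)^4*(q1 y)*(deriv q1 y) + 2*(u y)*(v y)^4*(deriv v y) + (-6)*(u y)*(v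 y)^4*(deriv u y) + (2/3)*(u y)*(v y)^5*(deriv v y) + (-2)*(u y)*(v y)^5*(deriv u y) + (-27/2)*(u y)^2*(v y)*(q1 y)*(deriv q1 y) + (-18)*(u y)^2*(v y)^2*(q2 y)*(deriv q2 y) + (-18)*(u y)^2*(v y)^2*(q1 y)*(deriv q1 y) + (-9/2)*(u y)^2*(v y)^2*(deriv v y) + (9/2)*(u y)^2*(v y)^2*(deriv u y) + (-12)*(u y)^2*(v y)^3*(q2 y)*(deriv q2 y) + (-6)*(u y)^2*(v y)^3*(q1 y)*(deriv q1 y) + (-6)*(u y)^2*(v y)^3*(deriv v y) + 6*(u y)^2*(v y)^3*(deriv u y) + (-2)*(u y)^2*(v y)^4*(deriv v y) + 2*(u y)^2*(v y)^4*(deriv u y) + (9/2)*(u y)^3*(q1 y)*(deriv q1 y) + 6*(u y)^3*(v y)*(q2 y)*(deriv q2 y) + 6*(u y)^3*(v y)*(q1 y)*(deriv q1 y) + (9/2)*(u y)^3*(v y)*(deriv v y) + (-3/2)*(u y)^3*(v y)*(deriv u y) + 4*(u y)^3*(v y)^2*(q2 y)*(deriv q2 y) + 2*(u y)^3*(v y)^2*(q1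 y)*(deriv q1 y) + 6*(u y)^3*(v y)^2*(deriv v y) + (-2)*(u y)^3*(v y)^2*(deriv u y) + 2*(u y)^3*(v y)^3*(deriv v y) + (-2/3)*(u y)^3*(v y)^3*(deriv u y) + (-3/2)*(u y)^4*(deriv v y) + (-2)*(u y)^4*(v y)*(deriv v y) + (-2/3)*(u y)^4*(v y)^2*(deriv v y)) * h3 +
      ((-2)*(v y)^5*(q2 y)*(deriv q2 y) + (-1)*(v y)^5*(deriv v y) + 1*(v y)^5*(deriv u y) + (2/3)*(v y)^6*(deriv u y) + 6*(u y)*(v y)^4*(q2 y)*(deriv q2 y) + 5*(u y)*(v y)^4*(deriv v y) + (-3)*(u y)*(v y)^4*(deriv u y) + (2/3)*(u y)*(v y)^5*(deriv v y) + (-2)*(u y)*(v y)^5*(deriv u y) + (-6)*(u y)^2*(v y)^3*(q2 y)*(deriv q2 y) + (-9)*(u y)^2*(v y)^3*(deriv v y) + 3*(u y)^2*(v y)^3*(deriv u y) + (-2)*(u y)^2*(v y)^4*(deriv v y) + 2*(u y)^2*(v y)^4*(deriv u y) + 2*(u y)^3*(v y)^2*(q2 y)*(deriv q2 y) + 7*(u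 y)^3*(v y)^2*(deriv v y) + (-1)*(u y)^3*(v y)^2*(deriv u y) + 2*(u y)^3*(v y)^3*(deriv v y) + (-2/3)*(u y)^3*(v y)^3*(deriv u y) + (-2)*(u y)^4*(v y)*(deriv v y) + (-2/3)*(u y)^4*(v y)^2*(deriv v y)) * h4 +
      (9*(v y)^3*(deriv q1 y)^2 + 9*(v y)^4 + 6*(v y)^4*(deriv q2 y)^2 + 12*(v y)^4*(deriv q1 y)^2 + (-18)*(v y)^4*(q2 y)^2 + (-18)*(v y)^4*(q1 y)^2 + 12*(v y)^5 + 4*(v y)^5*(deriv q2 y)^2 + 4*(v y)^5*(deriv q1 y)^2 + (-36)*(v y)^5*(q2 y)^2 + (-24)*(v y)^5*(q1 y)^2 + 4*(v y)^6 + (-16)*(v y)^6*(q2 y)^2 + (-8)*(v y)^6*(q1 y)^2 + (-27)*(u y)*(v y)^2*(deriv q1 y)^2 + (-27)*(u y)*(v y)^3 + (-18)*(u y)*(v y)^3*(deriv q2 y)^2 + (-36)*(u y)*(v y)^3*(deriv q1 y)^2 + 54*(u y)*(v y)^3*(q2 y)^2 + 54*(u y)*(v y)^3*(q1 y)^2 +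 (-36)*(u y)*(v y)^4 + (-12)*(u y)*(v y)^4*(deriv q2 y)^2 + (-12)*(u y)*(v y)^4*(deriv q1 y)^2 + 108*(u y)*(v y)^4*(q2 y)^2 + 72*(u y)*(v y)^4*(q1 y)^2 + 48*(u y)*(v y)^5*(q2 y)^2 + 24*(u y)*(v y)^5*(q1 y)^2 + 16*(u y)*(v y)^6 + (16/3)*(u y)*(v y)^7 + 27*(u y)^2*(v y)*(deriv q1 y)^2 + 27*(u y)^2*(v y)^2 + 18*(u y)^2*(v y)^2*(deriv q2 y)^2 + 36*(u y)^2*(v y)^2*(deriv q1 y)^2 + (-54)*(u y)^2*(v y)^2*(q2 y)^2 + (-54)*(u y)^2*(v y)^2*(q1 y)^2 + 36*(u y)^2*(v y)^3 + 12*(u y)^2*(v y)^3*(deriv q2 y)^2 + 12*(u y)^2*(v y)^3*(deriv q1 y)^2 + (-108)*(u y)^2*(v y)^3*(q2 y)^2 + (-72)*(u y)^2*(v y)^3*(q1 y)^2 + (-24)*(u y)^2*(v y)^4 + (-48)*(u y)^2*(v y)^4*(q2 y)^2 + (-24)*(u y)^2*(v y)^4*(q1 y)^2 + (-48)*(u y)^2*(v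 y)^5 + (-16)*(u y)^2*(v y)^6 + (-9)*(u y)^3*(deriv q1 y)^2 + (-9)*(u y)^3*(v y) + (-6)*(u y)^3*(v y)*(deriv q2 y)^2 + (-12)*(u y)^3*(v y)*(deriv q1 y)^2 + 18*(u y)^3*(v y)*(q2 y)^2 + 18*(u y)^3*(v y)*(q1 y)^2 + (-12)*(u y)^3*(v y)^2 + (-4)*(u y)^3*(v y)^2*(deriv q2 y)^2 + (-4)*(u y)^3*(v y)^2*(deriv q1 y)^2 + 36*(u y)^3*(v y)^2*(q2 y)^2 + 24*(u y)^3*(v y)^2*(q1 y)^2 + 32*(u y)^3*(v y)^3 + 16*(u y)^3*(v y)^3*(q2 y)^2 + 8*(u y)^3*(v y)^3*(q1 y)^2 + 48*(u y)^3*(v y)^4 + 16*(u y)^3*(v y)^5 + (-12)*(u y)^4*(v y)^2 + (-16)*(u y)^4*(v y)^3 + (-16/3)*(u y)^4*(v y)^4) * (hu y) +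
      (6*(v y)^4*(deriv q1 y)^2 + 6*(v y)^5 + 4*(v y)^5*(deriv q2 y)^2 + 4*(v y)^5*(deriv q1 y)^2 + (-12)*(v y)^5*(q2 y)^2 + (-8)*(v y)^6 + (-8)*(v y)^6*(q2 y)^2 + (-8)*(v y)^7 + (-18)*(u y)*(v y)^3*(deriv q1 y)^2 + (-18)*(u y)*(v y)^4 + (-12)*(u y)*(v y)^4*(deriv q2 y)^2 + (-12)*(u y)*(v y)^4*(deriv q1 y)^2 + 36*(u y)*(v y)^4*(q2 y)^2 + 24*(u y)*(v y)^5 + 24*(u y)*(v y)^5*(q2 y)^2 + 32*(u y)*(v y)^6 + (16/3)*(u y)*(v y)^7 + 18*(u y)^2*(v y)^2*(deriv q1 y)^2 + 18*(u y)^2*(v y)^3 + 12*(u y)^2*(v y)^3*(deriv q2 y)^2 + 12*(u y)^2*(v y)^3*(deriv q1 y)^2 + (-36)*(u y)^2*(v y)^3*(q2 y)^2 + (-24)*(u y)^2*(v y)^4 + (-24)*(u y)^2*(v y)^4*(q2 y)^2 + (-48)*(u y)^2*(v y)^5 + (-16)*(u y)^2*(v y)^6 + (-6)*(u y)^3*(v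 y)*(deriv q1 y)^2 + (-6)*(u y)^3*(v y)^2 + (-4)*(u y)^3*(v y)^2*(deriv q2 y)^2 + (-4)*(u y)^3*(v y)^2*(deriv q1 y)^2 + 12*(u y)^3*(v y)^2*(q2 y)^2 + 8*(u y)^3*(v y)^3 + 8*(u y)^3*(v y)^3*(q2 y)^2 + 32*(u y)^3*(v y)^4 + 16*(u y)^3*(v y)^5 + (-8)*(u y)^4*(v y)^3 + (-16/3)*(u y)^4*(v y)^4) * (hv y)
    rcases mul_eq_zero.mp key with h | h
    · exact absurd h (pow_ne_zero 3 (sub_ne_zero.mpr (Ne.symm (hne y))))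
    · linarith
end

section
/- For every p with 0 < p² < 3/4, the polynomial P(s) = s(1 − 2s)(3 + 2s)(2p² + s)(3 − 4p² + 2s) and its derivative P' have no common zero in the interval [0, 1/2]. -/
theorem stmt_13 (p : ℝ) (hp : 0 < p^2) (hp' : p^2 < 3/4) :
    ∀ s ∈ Set.Icc (0:ℝ) (1/2),
      ¬ (s * (1 - 2*s) * (3 + 2*s) * (2*p^2 + s) * (3 - 4*p^2 + 2*s) = 0 ∧
         deriv (fun s => s * (1 - 2*s) * (3 + 2*s) * (2*p^2 + s) * (3 - 4*p^2 + 2*s)) s = 0) := by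
  intro s hs
  obtain ⟨hs0, hs1⟩ := hs
  rintro ⟨hP, hP'⟩
  -- compute the derivative
  have hA : HasDerivAt (fun x : ℝ => x) 1 s := hasDerivAt_id s
  have hB : HasDerivAt (fun x : ℝ => 1 - 2*x) (-2) s := by
    simpa using (hasDerivAt_id s).const_mul (2:ℝ) |>.const_sub 1
  have hC : HasDerivAt (fun x : ℝ => 3 + 2*x) 2 s := by
    simpa using ((hasDerivAt_id s).const_mul (2:ℝ)).const_add 3
  have hD : HasDerivAt (fun x : ℝ => 2*p^2 + x) 1 s := by
    simpa using (hasDerivAt_id s).const_add (2*p^2)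
  have hE : HasDerivAt (fun x : ℝ => 3 - 4*p^2 + 2*x) 2 s := by
    simpa using ((hasDerivAt_id s).const_mul (2:ℝ)).const_add (3 - 4*p^2)
  have hF : HasDerivAt (fun x : ℝ => x * (1 - 2*x) * (3 + 2*x) * (2*p^2 + x) * (3 - 4*p^2 + 2*x)) ((((1 * (1 - 2 * s) + s * -2) * (3 + 2 * s) + s * (1 - 2*s) * 2) * (2 * p ^ 2 + s) + s * (1 - 2*s) * (3 + 2*s) * 1) * (3 - 4 * p ^ 2 + 2 * s) + s * (1 - 2*s) * (3 + 2*s) * (2*p^2 + s) * 2) s := (((hA.mul hB).mul hC).mul hD).mul hE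
  have hderiv := hF.deriv
  rw [hderiv] at hP'
  -- positive factors
  have h3 : (0:ℝ) < 3 + 2*s := by linarith
  have h4 : (0:ℝ) < 2*p^2 + s := by nlinarith
  have h5 : (0:ℝ) < 3 - 4*p^2 + 2*s := by nlinarith
  -- from P = 0 conclude s = 0 or s = 1/2
  have hss : s * (1 - 2*s) = 0 := by
    rcases mul_eq_zero.mp hP with h | h
    · rcases mul_eq_zero.mp h with h | h
      · rcases mul_eq_zero.mp h with h | h
        · exact h
        · linarith
      · linarith
    · linarith
  rcases mul_eq_zero.mp hss with h | h
  · subst h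
    nlinarith [hP', sq_nonneg p]
  · have : s = 1/2 := by linarith
    subst this
    nlinarith [hP']
end

section
/- As p → 0⁺, the integral ∫₀^{1/2} ds/√(P(s)), with P(s) = s(1 − 2s)(3 + 2s)(2p² + s)(3 − 4p² + 2s), is asymptotically equivalent to −(2/3)·ln p; that is, the ratio of the integral to (−(2/3) ln p) tends to 1 as p → 0⁺. -/
open Real Filter

open MeasureTheory Set intervalIntegral Topology



noncomputable def DD (p s : ℝ) : ℝ :=
  s * (1 - 2*s) * (3 + 2*s) * (2*p^2 + s) * (3 - 4*p^2 + 2*s)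

noncomputable def ff (p s : ℝ) : ℝ := 1 / Real.sqrt (DD p s)

lemma QQ_le9 {p s : ℝ} (hs : 0 ≤ s) (hs2 : s ≤ 1/4) :
    (1 - 2*s) * ((3 + 2*s) * (3 - 4*p^2 + 2*s)) ≤ 9 := by
  have key : (1-2*s)*((3+2*s)*(3-4*p^2+2*s))
      = 9 - (6*s+20*s^2+8*s^3) - p^2*(12-16*s-16*s^2) := by ring
  have h1 : (0:ℝ) ≤ 6*s+20*s^2+8*s^3 := by positivity
  have h2 : (0:ℝ) ≤ p^2*(12-16*s-16*s^2) := by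
    apply mul_nonneg (sq_nonneg p); nlinarith
  linarith [key.le]

lemma DD_ge1 {p s : ℝ} (hp : 0 < p) (hp4 : p ≤ 1/4) (hs : 0 < s) (hs2 : s ≤ 1/4) :
    15/2 * p^2 * s ≤ DD p s := by
  have hpp : p^2 ≤ 1/16 := by nlinarith
  have h1 : (0:ℝ) ≤ s := hs.le
  have h2 : (0:ℝ) ≤ 1-2*s := by linarith
  have h3 : (0:ℝ) ≤ 3+2*s := by linarith
  have h4 : (0:ℝ) ≤ 2*p^2+s := by positivity
  have h5 : (0:ℝ) ≤ 3-4*p^2+2*s := by nlinarith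
  calc 15/2 * p^2 * s = s * (1/2) * 3 * (2*p^2) * (5/2) := by ring
  _ ≤ DD p s := by
      unfold DD
      gcongr <;> nlinarith

lemma DD_le1 {p s : ℝ} (hs : 0 ≤ s) (hs2 : s ≤ 1/4) :
    DD p s ≤ (3 * (2*p^2 + s))^2 := by
  have hq := QQ_le9 (p := p) hs hs2
  have h4 : (0:ℝ) ≤ 2*p^2+s := by positivity
  calc DD p s = s * ((1 - 2*s) * ((3 + 2*s) * (3 - 4*p^2 + 2*s))) * (2*p^2 + s) := by
        unfold DD; ring
  _ ≤ s * 9 * (2*p^2 + s) := by gcongr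
  _ ≤ (3 * (2*p^2 + s))^2 := by nlinarith [mul_nonneg h4 (sq_nonneg p)]

lemma DD_ge2 {p s : ℝ} (h2p : 2*p^2 ≤ s) (hs : 0 < s) (hs2 : s ≤ 1/4) :
    (3*s)^2 ≤ DD p s * (1+9*s)^2 := by
  have hq : 9 - 18*s ≤ (1 - 2*s) * ((3 + 2*s) * (3 - 4*p^2 + 2*s)) := by
    have key : (1-2*s)*((3+2*s)*(3-4*p^2+2*s))
        = 9 - (6*s+20*s^2+8*s^3) - p^2*(12-16*s-16*s^2) := by ring
    have h1 : 6*s+20*s^2+8*s^3 ≤ 12*s := by nlinarith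
    have h2 : p^2*(12-16*s-16*s^2) ≤ 6*s := by nlinarith [sq_nonneg p, sq_nonneg s]
    linarith
  have h9 : (0:ℝ) < 9 - 18*s := by linarith
  have hDD : s * s * (9 - 18*s) ≤ DD p s := by
    calc s * s * (9-18*s) ≤ s * (2*p^2+s) * ((1 - 2*s) * ((3 + 2*s) * (3 - 4*p^2 + 2*s))) := by
          have hb : s ≤ 2*p^2+s := by nlinarith [sq_nonneg p]
          have hss : (0:ℝ) ≤ s * s := by positivity
          have e1 : s * s * (9-18*s) ≤ s * (2*p^2+s) * (9-18*s) := by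
            nlinarith [mul_nonneg (mul_nonneg hs.le (sq_nonneg p)) h9.le]
          have e2 : s * (2*p^2+s) * (9-18*s) ≤ s * (2*p^2+s) * ((1 - 2*s) * ((3 + 2*s) * (3 - 4*p^2 + 2*s))) := by
            apply mul_le_mul_of_nonneg_left hq
            positivity
          linarith
    _ = DD p s := by unfold DD; ring
  have key2 : (3*s)^2 ≤ s * s * (9-18*s) * (1+9*s)^2 := by
    have hcube : (0:ℝ) ≤ s*s*s*(144+405*s-1458*s^2) := by
      apply mul_nonneg (by positivity)
      nlinarith
    nlinarith [hcube]
  calc (3*s)^2 ≤ s * s * (9-18*s) * (1+9*s)^2 := key2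
  _ ≤ DD p s * (1+9*s)^2 := by
      apply mul_le_mul_of_nonneg_right hDD
      positivity

lemma DD_pos {p s : ℝ} (hp : 0 < p) (hp4 : p ≤ 1/4) (hs : 0 < s) (hs2 : s < 1/2) :
    0 < DD p s := by
  have hpp : p^2 ≤ 1/16 := by nlinarith
  unfold DD
  have h1 : (0:ℝ) < 1 - 2*s := by linarith
  have h2 : (0:ℝ) < 3 + 2*s := by linarith
  have h3 : (0:ℝ) < 2*p^2 + s := by positivity
  have h4 : (0:ℝ) < 3 - 4*p^2 + 2*s := by nlinarith
  positivity


lemma ff_le_mid {p s : ℝ} (h2p : 2*p^2 ≤ s) (hs : 0 < s) (hs2 : s ≤ 1/4) :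
    ff p s ≤ 1/(3*s) + 3 := by
  have hD := DD_ge2 (p := p) h2p hs hs2
  have h19 : (0:ℝ) < 1 + 9*s := by linarith
  have h1 : 3*s/(1+9*s) ≤ Real.sqrt (DD p s) := by
    rw [Real.le_sqrt' (by positivity)]
    rw [div_pow, div_le_iff₀ (by positivity)]
    linarith
  have h2 : ff p s ≤ 1/(3*s/(1+9*s)) := by
    unfold ff
    apply one_div_le_one_div_of_le (by positivity) h1
  calc ff p s ≤ 1/(3*s/(1+9*s)) := h2
  _ = 1/(3*s) + 3 := by field_simp; ring

lemma ff_ge_low {p s : ℝ} (hp : 0 < p) (hp4 : p ≤ 1/4) (hs : 0 < s) (hs2 : s ≤ 1/4) :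
    1/(3*(2*p^2+s)) ≤ ff p s := by
  have h1 : Real.sqrt (DD p s) ≤ 3*(2*p^2+s) := by
    have := Real.sqrt_le_sqrt (DD_le1 (p := p) hs.le hs2)
    rwa [Real.sqrt_sq (by positivity)] at this
  have hpos : 0 < Real.sqrt (DD p s) :=
    Real.sqrt_pos.2 (DD_pos hp hp4 hs (by linarith))
  unfold ff
  exact one_div_le_one_div_of_le hpos h1

lemma ff_le_left {p s : ℝ} (hp : 0 < p) (hp4 : p ≤ 1/4) (hs : 0 < s) (hs2 : s ≤ 1/4) :
    ff p s ≤ (Real.sqrt (15/2) * p)⁻¹ * (Real.sqrt s)⁻¹ := by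
  have h1 : Real.sqrt (15/2) * p * Real.sqrt s ≤ Real.sqrt (DD p s) := by
    have e : Real.sqrt (15/2) * p * Real.sqrt s = Real.sqrt (15/2 * p^2 * s) := by
      rw [Real.sqrt_mul (by positivity : (0:ℝ) ≤ 15/2*p^2)]
      rw [Real.sqrt_mul (by norm_num : (0:ℝ) ≤ 15/2)]
      rw [Real.sqrt_sq hp.le]
    rw [e]
    exact Real.sqrt_le_sqrt (DD_ge1 hp hp4 hs hs2)
  have hpos : (0:ℝ) < Real.sqrt (15/2) * p * Real.sqrt s := by positivity
  unfold ff
  rw [one_div]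
  calc (Real.sqrt (DD p s))⁻¹ ≤ (Real.sqrt (15/2) * p * Real.sqrt s)⁻¹ := by
        exact inv_anti₀ hpos h1
  _ = (Real.sqrt (15/2) * p)⁻¹ * (Real.sqrt s)⁻¹ := by rw [mul_inv]

lemma ff_le_right {p s : ℝ} (hp : 0 < p) (hp4 : p ≤ 1/4) (hs : 1/4 ≤ s) (hs2 : s ≤ 1/2) :
    ff p s ≤ Real.sqrt 2 * (Real.sqrt (1-2*s))⁻¹ := by
  rcases eq_or_lt_of_le hs2 with h | h
  · subst h
    have : DD p (1/2) = 0 := by unfold DD; ring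
    unfold ff
    rw [this, Real.sqrt_zero, div_zero]
    positivity
  · have hpp : p^2 ≤ 1/16 := by nlinarith
    have h12 : (0:ℝ) < 1 - 2*s := by linarith
    have hD : (1-2*s)/2 ≤ DD p s := by
      calc (1-2*s)/2 ≤ (1/4) * (1-2*s) * 3 * (1/4) * 3 := by nlinarith
      _ ≤ DD p s := by
          unfold DD
          gcongr <;> nlinarith
    have h1 : Real.sqrt ((1-2*s)/2) ≤ Real.sqrt (DD p s) := Real.sqrt_le_sqrt hD
    have e : Real.sqrt ((1-2*s)/2) = Real.sqrt (1-2*s) / Real.sqrt 2 := by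
      rw [Real.sqrt_div h12.le]
    have hpos : (0:ℝ) < Real.sqrt (1-2*s) / Real.sqrt 2 :=
      div_pos (Real.sqrt_pos.2 h12) (Real.sqrt_pos.2 two_pos)
    unfold ff
    rw [one_div]
    calc (Real.sqrt (DD p s))⁻¹ ≤ (Real.sqrt (1-2*s) / Real.sqrt 2)⁻¹ := by
          apply inv_anti₀ hpos
          rw [← e]; exact h1
    _ = Real.sqrt 2 * (Real.sqrt (1-2*s))⁻¹ := by
        rw [inv_div, div_eq_mul_inv]

lemma ff_nonneg (p s : ℝ) : 0 ≤ ff p s := by unfold ff; positivity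

lemma ff_meas (p : ℝ) : Measurable (ff p) := by
  unfold ff DD
  simp only [one_div]
  apply Measurable.inv
  apply Measurable.sqrt
  fun_prop

lemma inv_sqrt_eq {x : ℝ} (hx : 0 ≤ x) : (Real.sqrt x)⁻¹ = x ^ (-(1/2) : ℝ) := by
  rw [Real.sqrt_eq_rpow, ← Real.rpow_neg hx]

lemma intble_inv_sqrt (a b : ℝ) (ha : 0 ≤ a) (hb : 0 ≤ b) :
    IntervalIntegrable (fun s => (Real.sqrt s)⁻¹) volume a b := by
  have h := intervalIntegrable_rpow' (a := a) (b := b) (r := -(1/2)) (by norm_num)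
  rw [intervalIntegrable_iff] at h ⊢
  apply h.congr_fun ?_ measurableSet_uIoc
  intro s hs
  have hs0 : 0 ≤ s := by
    rw [Set.mem_uIoc] at hs
    rcases hs with ⟨h1, _⟩ | ⟨h1, _⟩ <;> linarith
  simp only
  rw [inv_sqrt_eq hs0]

lemma integral_inv_sqrt (a b : ℝ) (ha : 0 ≤ a) (hab : a ≤ b) :
    ∫ s in a..b, (Real.sqrt s)⁻¹ = 2*Real.sqrt b - 2*Real.sqrt a := by
  rw [integral_congr (g := fun s => s^(-(1/2):ℝ)) ?_]
  · rw [integral_rpow (Or.inl (by norm_num))]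
    norm_num
    rw [Real.sqrt_eq_rpow, Real.sqrt_eq_rpow]
    ring
  · intro s hs
    rw [uIcc_of_le hab] at hs
    exact inv_sqrt_eq (le_trans ha hs.1)

lemma intble_dom_right : IntervalIntegrable
    (fun s => Real.sqrt 2 * (Real.sqrt (1-2*s))⁻¹) volume (1/4) (1/2) := by
  have h0 : IntervalIntegrable (fun x => (Real.sqrt x)⁻¹) volume 0 (1/2) :=
    intble_inv_sqrt _ _ le_rfl (by norm_num)
  have h1 := h0.comp_mul_left (c := 2)
  rw [show (0:ℝ)/2 = 0 by norm_num, show (1/2:ℝ)/2 = 1/4 by norm_num] at h1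
  have h2 := h1.comp_sub_left (1/2)
  rw [show (1/2:ℝ) - 0 = 1/2 by norm_num, show (1/2:ℝ) - 1/4 = 1/4 by norm_num] at h2
  have h3 := (h2.symm).const_mul (Real.sqrt 2)
  have e : (fun x : ℝ => Real.sqrt 2 * (Real.sqrt (2*(1/2 - x)))⁻¹)
      = fun x => Real.sqrt 2 * (Real.sqrt (1-2*x))⁻¹ := by
    funext x; ring_nf
  rwa [e] at h3

lemma integral_dom_right : ∫ s in (1/4:ℝ)..(1/2), Real.sqrt 2 * (Real.sqrt (1-2*s))⁻¹ = 1 := by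
  have hderiv : ∀ x ∈ Ioo (1/4:ℝ) (1/2),
      HasDerivAt (fun s => -(Real.sqrt 2 * Real.sqrt (1-2*s)))
        (Real.sqrt 2 * (Real.sqrt (1-2*x))⁻¹) x := by
    intro x hx
    have h12 : (0:ℝ) < 1 - 2*x := by linarith [hx.2]
    have hne : (1 - 2*x) ≠ 0 := ne_of_gt h12
    have inner : HasDerivAt (fun s : ℝ => 1 - 2*s) (-2) x := by
      simpa using ((hasDerivAt_id x).const_mul (2:ℝ)).const_sub (1:ℝ)
    have hsq := (Real.hasDerivAt_sqrt hne).comp x inner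
    have h := (hsq.const_mul (Real.sqrt 2)).neg
    refine h.congr_deriv ?_
    have hsp : Real.sqrt (1-2*x) ≠ 0 := ne_of_gt (Real.sqrt_pos.2 h12)
    field_simp
  have hcont : ContinuousOn (fun s => -(Real.sqrt 2 * Real.sqrt (1-2*s))) (Icc (1/4:ℝ) (1/2)) := by
    fun_prop
  rw [integral_eq_sub_of_hasDerivAt_of_le (by norm_num) hcont hderiv intble_dom_right]
  rw [show (1:ℝ) - 2*(1/2:ℝ) = 0 by norm_num, show (1:ℝ) - 2*(1/4:ℝ) = 1/2 by norm_num,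
    Real.sqrt_zero, mul_zero, neg_zero, zero_sub, neg_neg,
    ← Real.sqrt_mul (by norm_num : (0:ℝ) ≤ 2)]
  norm_num

lemma integral_low {p : ℝ} (hp : 0 < p) :
    ∫ s in (0:ℝ)..(1/4), 1/(3*(2*p^2+s))
      = 1/3 * Real.log ((2*p^2+1/4)/(2*p^2)) := by
  have e : ∀ s : ℝ, 1/(3*(2*p^2+s)) = (1/3) * (2*p^2+s)⁻¹ := by
    intro s; rw [one_div, mul_inv, one_div]
  rw [integral_congr (g := fun s => (1/3) * (2*p^2+s)⁻¹) (fun s _ => e s)]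
  rw [intervalIntegral.integral_const_mul]
  rw [integral_comp_add_left (fun x : ℝ => x⁻¹) (2*p^2)]
  rw [show 2*p^2 + 0 = 2*p^2 by ring]
  rw [integral_inv_of_pos (by positivity) (by positivity)]

lemma integral_mid {c : ℝ} (hc : 0 < c) (hc4 : c ≤ 1/4) :
    ∫ s in c..(1/4), (1/(3*s) + 3)
      = 1/3 * Real.log ((1/4)/c) + 3*(1/4 - c) := by
  have hcont : ContinuousOn (fun s : ℝ => 1/(3*s)) (uIcc c (1/4)) := by
    apply ContinuousOn.div continuousOn_const (by fun_prop)
    intro x hx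
    rw [uIcc_of_le hc4] at hx
    have h1 := hx.1
    exact ne_of_gt (by nlinarith)
  rw [integral_add (hcont.intervalIntegrable) (intervalIntegrable_const)]
  have e : ∀ s : ℝ, 1/(3*s) = (1/3) * s⁻¹ := by
    intro s; rw [one_div, mul_inv, one_div]
  rw [integral_congr (g := fun s => (1/3) * s⁻¹) (fun s _ => e s)]
  rw [intervalIntegral.integral_const_mul, integral_inv_of_pos hc (by norm_num), intervalIntegral.integral_const]
  simp [smul_eq_mul]
  ring

lemma ff_intble_left {p : ℝ} (hp : 0 < p) (hp4 : p ≤ 1/4) :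
    IntervalIntegrable (ff p) volume 0 (1/4) := by
  rw [intervalIntegrable_iff, uIoc_of_le (by norm_num : (0:ℝ) ≤ 1/4)]
  have hdom : IntegrableOn (fun s => (Real.sqrt (15/2) * p)⁻¹ * (Real.sqrt s)⁻¹)
      (Ioc 0 (1/4)) volume := by
    have h := (intble_inv_sqrt 0 (1/4) le_rfl (by norm_num)).const_mul
      ((Real.sqrt (15/2) * p)⁻¹)
    rw [intervalIntegrable_iff, uIoc_of_le (by norm_num : (0:ℝ) ≤ 1/4)] at h
    exact h
  apply Integrable.mono' hdom ((ff_meas p).aestronglyMeasurable.restrict)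
  refine (ae_restrict_iff' measurableSet_Ioc).2 (ae_of_all _ ?_)
  intro s hs
  rw [Real.norm_eq_abs, abs_of_nonneg (ff_nonneg p s)]
  exact ff_le_left hp hp4 hs.1 hs.2

lemma ff_intble_right {p : ℝ} (hp : 0 < p) (hp4 : p ≤ 1/4) :
    IntervalIntegrable (ff p) volume (1/4) (1/2) := by
  rw [intervalIntegrable_iff, uIoc_of_le (by norm_num : (1/4:ℝ) ≤ 1/2)]
  have hdom : IntegrableOn (fun s => Real.sqrt 2 * (Real.sqrt (1-2*s))⁻¹)
      (Ioc (1/4) (1/2)) volume := by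
    have h := intble_dom_right
    rw [intervalIntegrable_iff, uIoc_of_le (by norm_num : (1/4:ℝ) ≤ 1/2)] at h
    exact h
  apply Integrable.mono' hdom ((ff_meas p).aestronglyMeasurable.restrict)
  refine (ae_restrict_iff' measurableSet_Ioc).2 (ae_of_all _ ?_)
  intro s hs
  rw [Real.norm_eq_abs, abs_of_nonneg (ff_nonneg p s)]
  exact ff_le_right hp hp4 hs.1.le hs.2

lemma integral_mono_Ioc {f g : ℝ → ℝ} {a b : ℝ} (hab : a ≤ b)
    (hf : IntervalIntegrable f volume a b) (hg : IntervalIntegrable g volume a b)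
    (h : ∀ x ∈ Ioc a b, f x ≤ g x) :
    ∫ x in a..b, f x ≤ ∫ x in a..b, g x := by
  simpa only [intervalIntegral.integral_of_le hab]
    using setIntegral_mono_on hf.1 hg.1 measurableSet_Ioc h

lemma log8_le7 : Real.log 8 ≤ 7 := by
  have := Real.log_le_sub_one_of_pos (by norm_num : (0:ℝ) < 8)
  linarith

lemma log_eight_p {p : ℝ} (hp : 0 < p) :
    Real.log ((1/4)/(2*p^2)) = -Real.log 8 - 2*Real.log p := by
  have h1 : (1/4)/(2*p^2) = (8*p^2)⁻¹ := by field_simp; ring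
  rw [h1, Real.log_inv, Real.log_mul (by norm_num) (by positivity),
    Real.log_pow]
  push_cast
  ring

lemma key_bounds {p : ℝ} (hp : 0 < p) (hp4 : p ≤ 1/4) :
    -(2/3)*Real.log p - 3 ≤ (∫ s in (0:ℝ)..(1/2), ff p s) ∧
    (∫ s in (0:ℝ)..(1/2), ff p s) ≤ -(2/3)*Real.log p + 5 := by
  have hc : (0:ℝ) < 2*p^2 := by positivity
  have hc8 : 2*p^2 ≤ 1/8 := by nlinarith
  have hintL := ff_intble_left hp hp4
  have hintR := ff_intble_right hp hp4
  have hint1 : IntervalIntegrable (ff p) volume 0 (2*p^2) :=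
    hintL.mono_set (by rw [uIcc_of_le (by linarith), uIcc_of_le (by norm_num)]; exact Icc_subset_Icc le_rfl (by linarith))
  have hint2 : IntervalIntegrable (ff p) volume (2*p^2) (1/4) :=
    hintL.mono_set (by rw [uIcc_of_le (by linarith), uIcc_of_le (by norm_num)]; exact Icc_subset_Icc (by linarith) le_rfl)
  have hsplit : (∫ s in (0:ℝ)..(1/2), ff p s)
      = (∫ s in (0:ℝ)..(1/4), ff p s) + ∫ s in (1/4:ℝ)..(1/2), ff p s :=
    (integral_add_adjacent_intervals hintL hintR).symm
  have hsplit2 : (∫ s in (0:ℝ)..(1/4), ff p s)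
      = (∫ s in (0:ℝ)..(2*p^2), ff p s) + ∫ s in (2*p^2)..(1/4:ℝ), ff p s :=
    (integral_add_adjacent_intervals hint1 hint2).symm
  -- lower bound
  have hlow_int : IntervalIntegrable (fun s => 1/(3*(2*p^2+s))) volume 0 (1/4) := by
    apply ContinuousOn.intervalIntegrable
    apply ContinuousOn.div continuousOn_const (by fun_prop)
    intro x hx
    rw [uIcc_of_le (by norm_num : (0:ℝ) ≤ 1/4)] at hx
    have h1 := hx.1
    nlinarith
  have hL1 : (∫ s in (0:ℝ)..(1/4), 1/(3*(2*p^2+s))) ≤ ∫ s in (0:ℝ)..(1/4), ff p s := by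
    apply integral_mono_Ioc (by norm_num) hlow_int hintL
    intro x hx
    exact ff_ge_low hp hp4 hx.1 hx.2
  have hL2 : (0:ℝ) ≤ ∫ s in (1/4:ℝ)..(1/2), ff p s :=
    intervalIntegral.integral_nonneg (by norm_num) (fun x _ => ff_nonneg p x)
  have hL3 : -(2/3)*Real.log p - 3 ≤ ∫ s in (0:ℝ)..(1/4), 1/(3*(2*p^2+s)) := by
    rw [integral_low hp]
    have hmono : Real.log ((1/4)/(2*p^2)) ≤ Real.log ((2*p^2+1/4)/(2*p^2)) := by
      apply Real.log_le_log (by positivity)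
      gcongr
      nlinarith
    have := log_eight_p hp
    nlinarith [log8_le7]
  -- upper bound, piece 1
  have hU1 : (∫ s in (0:ℝ)..(2*p^2), ff p s) ≤ 2 := by
    have hm : (∫ s in (0:ℝ)..(2*p^2), ff p s)
        ≤ ∫ s in (0:ℝ)..(2*p^2), (Real.sqrt (15/2) * p)⁻¹ * (Real.sqrt s)⁻¹ := by
      apply integral_mono_Ioc (by linarith)
        hint1 ((intble_inv_sqrt 0 (2*p^2) le_rfl (by linarith)).const_mul _)
      intro x hx
      exact ff_le_left hp hp4 hx.1 (by linarith [hx.2])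
    rw [intervalIntegral.integral_const_mul, integral_inv_sqrt 0 (2*p^2) le_rfl (by linarith)] at hm
    have hsq : Real.sqrt (2*p^2) = Real.sqrt 2 * p := by
      rw [Real.sqrt_mul (by norm_num), Real.sqrt_sq hp.le]
    rw [hsq, Real.sqrt_zero] at hm
    have h215 : Real.sqrt 2 ≤ Real.sqrt (15/2) := Real.sqrt_le_sqrt (by norm_num)
    have hs2pos : (0:ℝ) < Real.sqrt 2 := Real.sqrt_pos.2 (by norm_num)
    have hinv : (Real.sqrt (15/2) * p)⁻¹ ≤ (Real.sqrt 2 * p)⁻¹ := by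
      apply inv_anti₀ (by exact mul_pos hs2pos hp)
      apply mul_le_mul_of_nonneg_right h215 hp.le
    have : (Real.sqrt (15/2) * p)⁻¹ * (2*(Real.sqrt 2 * p) - 2*0)
        ≤ (Real.sqrt 2 * p)⁻¹ * (2*(Real.sqrt 2 * p) - 2*0) := by
      apply mul_le_mul_of_nonneg_right hinv (by nlinarith [mul_pos hs2pos hp])
    have heq : (Real.sqrt 2 * p)⁻¹ * (2*(Real.sqrt 2 * p) - 2*0) = 2 := by
      field_simp
      ring
    linarith
  -- upper bound, piece 2
  have hmid_int : IntervalIntegrable (fun s => 1/(3*s) + 3) volume (2*p^2) (1/4) := by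
    apply ContinuousOn.intervalIntegrable
    apply ContinuousOn.add ?_ continuousOn_const
    apply ContinuousOn.div continuousOn_const (by fun_prop)
    intro x hx
    rw [uIcc_of_le (by linarith)] at hx
    have h1 := hx.1
    nlinarith
  have hU2 : (∫ s in (2*p^2)..(1/4:ℝ), ff p s) ≤ -(2/3)*Real.log p + 3/4 := by
    have hm : (∫ s in (2*p^2)..(1/4:ℝ), ff p s) ≤ ∫ s in (2*p^2)..(1/4:ℝ), (1/(3*s) + 3) := by
      apply integral_mono_Ioc (by linarith) hint2 hmid_int
      intro x hx
      exact ff_le_mid hx.1.le (by linarith [hx.1]) hx.2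
    rw [integral_mid hc (by linarith)] at hm
    have hlog8 : (0:ℝ) ≤ Real.log 8 := Real.log_nonneg (by norm_num)
    have := log_eight_p hp
    nlinarith
  -- upper bound, piece 3
  have hU3 : (∫ s in (1/4:ℝ)..(1/2), ff p s) ≤ 1 := by
    calc (∫ s in (1/4:ℝ)..(1/2), ff p s)
        ≤ ∫ s in (1/4:ℝ)..(1/2), Real.sqrt 2 * (Real.sqrt (1-2*s))⁻¹ := by
          apply integral_mono_Ioc (by norm_num) hintR intble_dom_right
          intro x hx
          exact ff_le_right hp hp4 hx.1.le hx.2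
    _ = 1 := integral_dom_right
  constructor
  · rw [hsplit]; linarith
  · rw [hsplit, hsplit2]; linarith

theorem stmt_18 :
    Filter.Tendsto
      (fun p : ℝ =>
        (∫ s in (0:ℝ)..(1/2),
          1 / Real.sqrt (s * (1 - 2*s) * (3 + 2*s) * (2*p^2 + s) * (3 - 4*p^2 + 2*s)))
        / (-(2/3) * Real.log p))
      (nhdsWithin 0 (Set.Ioi 0)) (nhds 1) := by
  have hd : Tendsto (fun p : ℝ => -(2/3) * Real.log p) (𝓝[>] (0:ℝ)) atTop := by
    have h1 : Tendsto (fun p : ℝ => Real.log p) (𝓝[>] (0:ℝ)) atBot :=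
      Real.tendsto_log_nhdsGT_zero
    exact (tendsto_const_mul_atTop_of_neg (by norm_num : (-(2/3):ℝ) < 0)).2 h1
  have h3 : Tendsto (fun p : ℝ => 3 / (-(2/3) * Real.log p)) (𝓝[>] (0:ℝ)) (𝓝 0) :=
    Tendsto.div_atTop tendsto_const_nhds hd
  have h5 : Tendsto (fun p : ℝ => 5 / (-(2/3) * Real.log p)) (𝓝[>] (0:ℝ)) (𝓝 0) :=
    Tendsto.div_atTop tendsto_const_nhds hd
  have hlo : Tendsto (fun p : ℝ => 1 - 3 / (-(2/3) * Real.log p)) (𝓝[>] (0:ℝ)) (𝓝 1) := by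
    simpa using tendsto_const_nhds.sub h3
  have hhi : Tendsto (fun p : ℝ => 1 + 5 / (-(2/3) * Real.log p)) (𝓝[>] (0:ℝ)) (𝓝 1) := by
    simpa using tendsto_const_nhds.add h5
  have hmem : Ioc (0:ℝ) (1/4) ∈ 𝓝[>] (0:ℝ) :=
    Ioc_mem_nhdsGT_of_mem (by constructor <;> norm_num)
  apply tendsto_of_tendsto_of_tendsto_of_le_of_le' hlo hhi
  · filter_upwards [hmem] with p hp
    have hppos := hp.1
    have hp4 := hp.2
    have hdpos : 0 < -(2/3) * Real.log p := by
      have : Real.log p < 0 := Real.log_neg hppos (by linarith)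
      nlinarith
    have hI := (key_bounds hppos hp4).1
    have e : (∫ s in (0:ℝ)..(1/2),
        1 / Real.sqrt (s * (1 - 2*s) * (3 + 2*s) * (2*p^2 + s) * (3 - 4*p^2 + 2*s)))
        = ∫ s in (0:ℝ)..(1/2), ff p s := rfl
    rw [e]
    calc 1 - 3 / (-(2/3) * Real.log p)
        = (-(2/3) * Real.log p - 3) / (-(2/3) * Real.log p) := by
          rw [sub_div, div_self (ne_of_gt hdpos)]
    _ ≤ (∫ s in (0:ℝ)..(1/2), ff p s) / (-(2/3) * Real.log p) :=
          (div_le_div_iff_of_pos_right hdpos).2 hI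
  · filter_upwards [hmem] with p hp
    have hppos := hp.1
    have hp4 := hp.2
    have hdpos : 0 < -(2/3) * Real.log p := by
      have : Real.log p < 0 := Real.log_neg hppos (by linarith)
      nlinarith
    have hI := (key_bounds hppos hp4).2
    have e : (∫ s in (0:ℝ)..(1/2),
        1 / Real.sqrt (s * (1 - 2*s) * (3 + 2*s) * (2*p^2 + s) * (3 - 4*p^2 + 2*s)))
        = ∫ s in (0:ℝ)..(1/2), ff p s := rfl
    rw [e]
    calc (∫ s in (0:ℝ)..(1/2), ff p s) / (-(2/3) * Real.log p)
        ≤ (-(2/3) * Real.log p + 5) / (-(2/3) * Real.log p) :=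
          (div_le_div_iff_of_pos_right hdpos).2 hI
    _ = 1 + 5 / (-(2/3) * Real.log p) := by
          rw [add_div, div_self (ne_of_gt hdpos)]
end

section
/- The limit as α → 0⁺ of the integral ∫_{−α}^{α} dt / (√((3/2 − 2t)(5/2 − 2t)(3/2 + 2t))·√(α² − t²)) equals (4/(3√10))·π; consequently lim_{p→√(3/8)} Tv(p) = 8π/(3√10). -/
open Real Filter MeasureTheory Set

noncomputable def hfun (u : ℝ) : ℝ :=
  1 / Real.sqrt ((3/2 - 2*u) * (5/2 - 2*u) * (3/2 + 2*u))

lemma hfun_meas : Measurable hfun := by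
  have : Continuous fun u : ℝ => Real.sqrt ((3/2 - 2*u) * (5/2 - 2*u) * (3/2 + 2*u)) := by
    fun_prop
  unfold hfun
  exact measurable_const.div this.measurable

lemma image_sin (α : ℝ) (hα : 0 < α) :
    (fun θ : ℝ => α * Real.sin θ) '' Ioo (-(π/2)) (π/2) = Ioo (-α) α := by
  ext y
  constructor
  · rintro ⟨θ, hθ, rfl⟩
    have h1 : Real.sin θ < 1 := by
      have := Real.strictMonoOn_sin (a := θ) (b := π/2)
        ⟨le_of_lt hθ.1, le_of_lt hθ.2⟩ ⟨by linarith [Real.pi_pos], le_refl _⟩ hθ.2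
      simpa using this
    have h2 : -1 < Real.sin θ := by
      have := Real.strictMonoOn_sin (a := -(π/2)) (b := θ)
        ⟨le_refl _, by linarith [Real.pi_pos]⟩ ⟨le_of_lt hθ.1, le_of_lt hθ.2⟩ hθ.1
      simpa using this
    show -α < α * Real.sin θ ∧ α * Real.sin θ < α
    constructor
    · nlinarith
    · nlinarith
  · rintro ⟨h1, h2⟩
    refine ⟨Real.arcsin (y / α), ⟨?_, ?_⟩, ?_⟩
    · rw [Real.neg_pi_div_two_lt_arcsin]
      rw [lt_div_iff₀ hα]; linarith
    · rw [Real.arcsin_lt_pi_div_two]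
      rw [div_lt_iff₀ hα]; linarith
    · show α * Real.sin (Real.arcsin (y / α)) = y
      rw [Real.sin_arcsin (by rw [le_div_iff₀ hα]; linarith) (by rw [div_le_iff₀ hα]; linarith)]
      field_simp

lemma key_subst (α : ℝ) (hα : 0 < α) :
    (∫ t in (-α)..α,
        1 / (Real.sqrt ((3/2 - 2*t) * (5/2 - 2*t) * (3/2 + 2*t))
          * Real.sqrt (α^2 - t^2)))
      = ∫ θ in Ioo (-(π/2)) (π/2), hfun (α * Real.sin θ) := by
  rw [intervalIntegral.integral_of_le (by linarith), MeasureTheory.integral_Ioc_eq_integral_Ioo,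
    ← image_sin α hα]
  rw [integral_image_eq_integral_abs_deriv_smul measurableSet_Ioo
    (f' := fun θ => α * Real.cos θ)
    (fun θ _ => ((Real.hasDerivAt_sin θ).const_mul α).hasDerivWithinAt)
    (fun x hx y hy hxy => by
      have := Real.injOn_sin (Icc_subset_Icc (by linarith [Real.pi_pos]) (le_refl _)
          (Ioo_subset_Icc_self hx))
        (Icc_subset_Icc (by linarith [Real.pi_pos]) (le_refl _) (Ioo_subset_Icc_self hy))
        (mul_left_cancel₀ (ne_of_gt hα) hxy)
      exact this)]
  refine setIntegral_congr_fun measurableSet_Ioo (fun θ hθ => ?_)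
  have hc : 0 < Real.cos θ := Real.cos_pos_of_mem_Ioo hθ
  have hac : 0 < α * Real.cos θ := mul_pos hα hc
  have hsq : Real.sqrt (α^2 - (α * Real.sin θ)^2) = α * Real.cos θ := by
    have : α^2 - (α * Real.sin θ)^2 = (α * Real.cos θ)^2 := by
      have := Real.sin_sq_add_cos_sq θ; nlinarith
    rw [this, Real.sqrt_sq (le_of_lt hac)]
  rw [smul_eq_mul, hsq, abs_of_pos hac, hfun]
  set S := Real.sqrt ((3/2 - 2*(α * Real.sin θ)) * (5/2 - 2*(α * Real.sin θ))
    * (3/2 + 2*(α * Real.sin θ)))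
  rw [mul_comm S, one_div, mul_inv, ← mul_assoc, mul_inv_cancel₀ (ne_of_gt hac), one_mul, one_div]

lemma hfun_le_one {u : ℝ} (hu : |u| ≤ 1/4) : |hfun u| ≤ 1 := by
  have h1 : (2:ℝ) ≤ (3/2 - 2*u) * (5/2 - 2*u) * (3/2 + 2*u) := by
    rw [abs_le] at hu
    have a1 : (1:ℝ) ≤ 3/2 - 2*u := by linarith
    have a3 : (1:ℝ) ≤ 3/2 + 2*u := by linarith
    have b1 : (2:ℝ) ≤ (3/2 - 2*u) * (5/2 - 2*u) := by nlinarith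
    nlinarith [mul_le_mul b1 a3 (by norm_num) (by linarith)]
  have h2 : (1:ℝ) ≤ Real.sqrt ((3/2 - 2*u) * (5/2 - 2*u) * (3/2 + 2*u)) := by
    rw [show (1:ℝ) = Real.sqrt 1 by simp]
    exact Real.sqrt_le_sqrt (by linarith)
  rw [hfun, abs_of_nonneg (by positivity)]
  rw [div_le_one (by linarith)]; linarith

lemma hfun_zero : hfun 0 = 4 / (3 * Real.sqrt 10) := by
  have h45 : ((3:ℝ)/2 - 2*0) * (5/2 - 2*0) * (3/2 + 2*0) = (3/4)^2 * 10 := by norm_num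
  rw [hfun, h45, Real.sqrt_mul (by positivity), Real.sqrt_sq (by norm_num)]
  have h10 : Real.sqrt 10 ≠ 0 := by positivity
  field_simp

theorem stmt_19 :
    Filter.Tendsto
      (fun α : ℝ =>
        ∫ t in (-α)..α,
          1 / (Real.sqrt ((3/2 - 2*t) * (5/2 - 2*t) * (3/2 + 2*t))
            * Real.sqrt (α^2 - t^2)))
      (nhdsWithin 0 (Set.Ioi 0)) (nhds (4 * Real.pi / (3 * Real.sqrt 10)))
    ∧ Filter.Tendsto
      (fun α : ℝ =>
        2 * ∫ t in (-α)..α,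
          1 / (Real.sqrt ((3/2 - 2*t) * (5/2 - 2*t) * (3/2 + 2*t))
            * Real.sqrt (α^2 - t^2)))
      (nhdsWithin 0 (Set.Ioi 0)) (nhds (8 * Real.pi / (3 * Real.sqrt 10))) := by
  have hpi : (0:ℝ) < π := Real.pi_pos
  have main : Filter.Tendsto
      (fun α : ℝ => ∫ θ in Ioo (-(π/2)) (π/2), hfun (α * Real.sin θ))
      (nhdsWithin 0 (Set.Ioi 0)) (nhds (4 * Real.pi / (3 * Real.sqrt 10))) := by
    have hlim : (∫ θ in Ioo (-(π/2)) (π/2), hfun 0) = 4 * Real.pi / (3 * Real.sqrt 10) := by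
      rw [setIntegral_const, hfun_zero, measureReal_def, Real.volume_Ioo, smul_eq_mul]
      rw [show (π/2 - -(π/2)) = π by ring, ENNReal.toReal_ofReal (le_of_lt hpi)]
      ring
    rw [← hlim]
    apply MeasureTheory.tendsto_integral_filter_of_dominated_convergence
      (bound := fun _ => (1:ℝ))
    · filter_upwards with α
      exact (hfun_meas.comp (by fun_prop)).aestronglyMeasurable
    · filter_upwards [Ioo_mem_nhdsGT_of_mem (by norm_num : (0:ℝ) ∈ Ico 0 (1/4))] with α hα
      filter_upwards with θ
      apply hfun_le_one
      rw [abs_mul, abs_of_pos hα.1]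
      calc α * |Real.sin θ| ≤ α * 1 := by
            exact mul_le_mul_of_nonneg_left (Real.abs_sin_le_one θ) (le_of_lt hα.1)
        _ ≤ 1/4 := by linarith [hα.2]
    · exact MeasureTheory.integrableOn_const measure_Ioo_lt_top.ne
    · filter_upwards with θ
      have hcont : ContinuousAt hfun 0 := by
        have hP : Continuous fun u : ℝ =>
            Real.sqrt ((3/2 - 2*u) * (5/2 - 2*u) * (3/2 + 2*u)) := by fun_prop
        unfold hfun
        exact continuousAt_const.div hP.continuousAt
          (Real.sqrt_ne_zero'.2 (by norm_num))
      have h1 : Filter.Tendsto (fun α : ℝ => α * Real.sin θ)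
          (nhdsWithin 0 (Set.Ioi 0)) (nhds 0) := by
        have h0 : Tendsto (fun α : ℝ => α * Real.sin θ) (nhds 0)
            (nhds (0 * Real.sin θ)) :=
          (continuous_id.mul continuous_const).tendsto' 0 _ rfl |>.mono_left le_rfl
        rw [zero_mul] at h0
        exact h0.mono_left nhdsWithin_le_nhds
      exact hcont.tendsto.comp h1
  constructor
  · apply main.congr'
    filter_upwards [self_mem_nhdsWithin] with α hα
    exact (key_subst α hα).symm
  · have h2 := main.const_mul 2
    have : 2 * (4 * Real.pi / (3 * Real.sqrt 10)) = 8 * Real.pi / (3 * Real.sqrt 10) := by ring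
    rw [this] at h2
    apply h2.congr'
    filter_upwards [self_mem_nhdsWithin] with α hα
    rw [key_subst α hα]
end
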